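/- arXiv:1707.09891 — 2 statements merged into one kernel-verified Lean document; each statement's English description precedes it below -/
import Mathlib

section
/- Let (x*, y*) be a partial minimizer of the equality-constrained problem min f(x,y) s.t. g(x,y) = 0, x ∈ X, y ∈ Y. Suppose f is locally Lipschitz in each block direction with constant L around (x*,y*), and each constraint gᵢ satisfies the lower bound lᵢ ‖x - x*‖ ≤ |gᵢ(x,y*) - gᵢ(x*,y*)| and lᵢ ‖y - y*‖ ≤ |gᵢ(x*,y) - gᵢ(x*,y*)| for points in a neighborhood N(x*,y*) (and globally on the compact sets X × {y*} and {x*} × Y via the induced global Lipschitz bound). Set ρ̄ = (L / (m·l̄)) e with l̄ = minᵢ lᵢ and e the all-ones vector. Then for every ρ ≥ ρ̄ (componentwise), (x*, y*) is a partial minimizer over X × Y of the penalty function P(x,y;ρ) = f(x,y) + Σᵢ ρᵢ |gᵢ(x,y)|. -/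
/-!
Along a block direction the penalty dominates the objective's decrease: by the Lipschitz bound,
`f(x*) - f(x) ≤ L ‖x - x*‖`, while each `|gᵢ(x, y*)| ≥ lᵢ ‖x - x*‖ ≥ l̄ ‖x - x*‖`, so with `m` terms
of weight at least `L / (m l̄)` the penalty is at least `L ‖x - x*‖`. At the feasible point the
penalty vanishes.
-/

open Finset

theorem mul_le_sum_mul_abs_of_mul_le_abs {ι : Type*} (s : Finset ι) (hs : s.Nonempty)
    {L d : ℝ} {l ρ h : ι → ℝ} (hL : 0 ≤ L) (hl : ∀ i ∈ s, 0 < l i) (hd : 0 ≤ d)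
    (hρ : ∀ i ∈ s, L / (#s * s.inf' hs l) ≤ ρ i) (hh : ∀ i ∈ s, l i * d ≤ |h i|) :
    L * d ≤ ∑ i ∈ s, ρ i * |h i| := by
  set lmin := s.inf' hs l
  have hlmin : 0 < lmin := (lt_inf'_iff hs).2 hl
  have hcard : (0 : ℝ) < #s := by exact_mod_cast hs.card_pos
  have hterm : ∀ i ∈ s, L / (#s * lmin) * (lmin * d) ≤ ρ i * |h i| := by
    intro i hi
    have hlower : lmin * d ≤ |h i| :=
      (mul_le_mul_of_nonneg_right (inf'_le l hi) hd).trans (hh i hi)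
    calc L / (#s * lmin) * (lmin * d) ≤ L / (#s * lmin) * |h i| := by gcongr
      _ ≤ ρ i * |h i| := mul_le_mul_of_nonneg_right (hρ i hi) (abs_nonneg _)
  calc L * d = ∑ _i ∈ s, L / (#s * lmin) * (lmin * d) := by
        rw [sum_const, nsmul_eq_mul]
        field_simp
    _ ≤ ∑ i ∈ s, ρ i * |h i| := sum_le_sum hterm

theorem le_add_sum_mul_abs_of_abs_sub_le {ι : Type*} (s : Finset ι) (hs : s.Nonempty)
    {L d a b : ℝ} {l ρ h : ι → ℝ} (hL : 0 ≤ L) (hl : ∀ i ∈ s, 0 < l i) (hd : 0 ≤ d)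
    (hρ : ∀ i ∈ s, L / (#s * s.inf' hs l) ≤ ρ i) (hab : |b - a| ≤ L * d)
    (hh : ∀ i ∈ s, l i * d ≤ |h i|) :
    a ≤ b + ∑ i ∈ s, ρ i * |h i| := by
  have := mul_le_sum_mul_abs_of_mul_le_abs s hs hL hl hd hρ hh
  linarith [neg_abs_le (b - a)]

theorem stmt5_general {E F : Type*} [NormedAddCommGroup E] [NormedAddCommGroup F] {m : ℕ}
    (hm : (Finset.univ : Finset (Fin m)).Nonempty)
    (X : Set E) (Y : Set F)
    (f : E → F → ℝ) (g : E → F → Fin m → ℝ)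
    (xs : E) (ys : F)
    (hfeas : ∀ i, g xs ys i = 0)
    (L : ℝ) (hL : 0 ≤ L)
    (hfx : ∀ x ∈ X, |f x ys - f xs ys| ≤ L * ‖x - xs‖)
    (hfy : ∀ y ∈ Y, |f xs y - f xs ys| ≤ L * ‖y - ys‖)
    (l : Fin m → ℝ) (hl : ∀ i, 0 < l i)
    (hgx : ∀ i, ∀ x ∈ X, l i * ‖x - xs‖ ≤ |g x ys i - g xs ys i|)
    (hgy : ∀ i, ∀ y ∈ Y, l i * ‖y - ys‖ ≤ |g xs y i - g xs ys i|) :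
    ∀ ρ : Fin m → ℝ, (∀ i, L / (m * Finset.univ.inf' hm l) ≤ ρ i) →
      (∀ x ∈ X, f xs ys + (∑ i, ρ i * |g xs ys i|) ≤
        f x ys + ∑ i, ρ i * |g x ys i|) ∧
      (∀ y ∈ Y, f xs ys + (∑ i, ρ i * |g xs ys i|) ≤
        f xs y + ∑ i, ρ i * |g xs y i|) := by
  intro ρ hρ
  have hρ' : ∀ i ∈ univ, L / (#(univ : Finset (Fin m)) * univ.inf' hm l) ≤ ρ i := by
    simpa only [card_fin, mem_univ, forall_const] using hρ
  have hl' : ∀ i ∈ univ, 0 < l i := fun i _ => hl i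
  refine ⟨fun x hxX => ?_, fun y hyY => ?_⟩
  · simpa only [hfeas, abs_zero, mul_zero, sum_const_zero, add_zero] using
      le_add_sum_mul_abs_of_abs_sub_le univ hm hL hl' (norm_nonneg _) hρ' (hfx x hxX)
        fun i _ => by simpa only [hfeas, sub_zero] using hgx i x hxX
  · simpa only [hfeas, abs_zero, mul_zero, sum_const_zero, add_zero] using
      le_add_sum_mul_abs_of_abs_sub_le univ hm hL hl' (norm_nonneg _) hρ' (hfy y hyY)
        fun i _ => by simpa only [hfeas, sub_zero] using hgy i y hyY

/-- Exactness of the ℓ₁ penalty function with respect to partial minima: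
a partial minimizer of the equality-constrained problem is a partial minimizer
of the penalty function for all penalty weights ρ ≥ ρ̄ = (L/(m·l̄))e. -/
theorem stmt5 {E F : Type*} [NormedAddCommGroup E] [NormedAddCommGroup F] {m : ℕ}
    (hm : (Finset.univ : Finset (Fin m)).Nonempty)
    (X : Set E) (Y : Set F) (hXne : X.Nonempty) (hYne : Y.Nonempty)
    (hXc : IsCompact X) (hYc : IsCompact Y)
    (f : E → F → ℝ) (g : E → F → Fin m → ℝ)
    (xs : E) (ys : F) (hx : xs ∈ X) (hy : ys ∈ Y)
    (hfeas : ∀ i, g xs ys i = 0)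
    (hpm1 : ∀ x ∈ X, (∀ i, g x ys i = 0) → f xs ys ≤ f x ys)
    (hpm2 : ∀ y ∈ Y, (∀ i, g xs y i = 0) → f xs ys ≤ f xs y)
    (L : ℝ) (hL : 0 ≤ L)
    (hfx : ∀ x ∈ X, |f x ys - f xs ys| ≤ L * ‖x - xs‖)
    (hfy : ∀ y ∈ Y, |f xs y - f xs ys| ≤ L * ‖y - ys‖)
    (l : Fin m → ℝ) (hl : ∀ i, 0 < l i)
    (hgx : ∀ i, ∀ x ∈ X, l i * ‖x - xs‖ ≤ |g x ys i - g xs ys i|)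
    (hgy : ∀ i, ∀ y ∈ Y, l i * ‖y - ys‖ ≤ |g xs y i - g xs ys i|) :
    ∀ ρ : Fin m → ℝ, (∀ i, L / (m * Finset.univ.inf' hm l) ≤ ρ i) →
      (∀ x ∈ X, f xs ys + (∑ i, ρ i * |g xs ys i|) ≤
        f x ys + ∑ i, ρ i * |g x ys i|) ∧
      (∀ y ∈ Y, f xs ys + (∑ i, ρ i * |g xs ys i|) ≤
        f xs y + ∑ i, ρ i * |g xs y i|) :=
  stmt5_general hm X Y f g xs ys hfeas L hL hfx hfy l hl hgx hgy
end

section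
/- Let f : ℝ^{n_x} × ℝ^{n_y} → ℝ be continuous and X ⊆ ℝ^{n_x}, Y ⊆ ℝ^{n_y} be nonempty compact sets. Define Θ(x,y) as the set of pairs (x*, y*) with x* ∈ argmin_{x' ∈ X} f(x', y) and y* ∈ argmin_{y' ∈ Y} f(x*, y'). Suppose (x^{i+1}, y^{i+1}) ∈ Θ(x^i, y^i) for all i, and that for each i the minimizer x^{i+1} of f(·, y^i) over X is unique. Then every limit point (x*, y*) of a convergent subsequence of (x^i, y^i) is a partial minimum of f over X × Y, and any two such limit points z, z' satisfy f(z) = f(z'). -/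
/-- Convergence of the standard ADM: with unique x-updates, every limit point
of the iterates is a partial minimum, and all limit points share the same
objective value. -/
theorem stmt13 {E F : Type*} [MetricSpace E] [MetricSpace F]
    (X : Set E) (Y : Set F) (hXne : X.Nonempty) (hYne : Y.Nonempty)
    (hXc : IsCompact X) (hYc : IsCompact Y)
    (f : E → F → ℝ) (hf : Continuous fun z : E × F => f z.1 z.2)
    (x : ℕ → E) (y : ℕ → F) (hx0 : x 0 ∈ X) (hy0 : y 0 ∈ Y)
    (hstep : ∀ i, x (i + 1) ∈ X ∧ (∀ x' ∈ X, f (x (i + 1)) (y i) ≤ f x' (y i)) ∧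
      y (i + 1) ∈ Y ∧ ∀ y' ∈ Y, f (x (i + 1)) (y (i + 1)) ≤ f (x (i + 1)) y')
    (huniq : ∀ i, ∀ x' ∈ X, (∀ x'' ∈ X, f x' (y i) ≤ f x'' (y i)) → x' = x (i + 1)) :
    (∀ φ : ℕ → ℕ, StrictMono φ → ∀ xs ys,
      Filter.Tendsto (fun k => (x (φ k), y (φ k))) Filter.atTop (nhds (xs, ys)) →
      (∀ x' ∈ X, f xs ys ≤ f x' ys) ∧ ∀ y' ∈ Y, f xs ys ≤ f xs y') ∧
    (∀ φ ψ : ℕ → ℕ, StrictMono φ → StrictMono ψ → ∀ xs ys xs' ys',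
      Filter.Tendsto (fun k => (x (φ k), y (φ k))) Filter.atTop (nhds (xs, ys)) →
      Filter.Tendsto (fun k => (x (ψ k), y (ψ k))) Filter.atTop (nhds (xs', ys')) →
      f xs ys = f xs' ys') := by
  -- membership of all iterates
  have hmem : ∀ i, x i ∈ X ∧ y i ∈ Y := by
    intro i
    cases i with
    | zero => exact ⟨hx0, hy0⟩
    | succ n => exact ⟨(hstep n).1, (hstep n).2.2.1⟩
  set v : ℕ → ℝ := fun i => f (x i) (y i) with hv
  set w : ℕ → ℝ := fun i => f (x (i + 1)) (y i) with hw
  have hwv : ∀ i, w i ≤ v i := fun i => (hstep i).2.1 (x i) (hmem i).1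
  have hvw : ∀ i, v (i + 1) ≤ w i := fun i => (hstep i).2.2.2 (y i) (hmem i).2
  have hanti : Antitone v :=
    antitone_nat_of_succ_le fun i => (hvw i).trans (hwv i)
  -- lower bound
  obtain ⟨zmin, hzmem, hzmin⟩ :=
    (hXc.prod hYc).exists_isMinOn (hXne.prod hYne) hf.continuousOn
  have hbdd : BddBelow (Set.range v) := by
    refine ⟨f zmin.1 zmin.2, ?_⟩
    rintro r ⟨i, rfl⟩
    exact hzmin (Set.mk_mem_prod (hmem i).1 (hmem i).2)
  set L : ℝ := ⨅ i, v i with hL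
  have hvL : Filter.Tendsto v Filter.atTop (nhds L) :=
    tendsto_atTop_ciInf hanti hbdd
  have hwL : Filter.Tendsto w Filter.atTop (nhds L) := by
    refine tendsto_of_tendsto_of_tendsto_of_le_of_le ?_ hvL hvw hwv
    exact hvL.comp (Filter.tendsto_add_atTop_nat 1)
  -- every subsequential limit has value L and lies in X × Y
  have key : ∀ φ : ℕ → ℕ, StrictMono φ → ∀ xs ys,
      Filter.Tendsto (fun k => (x (φ k), y (φ k))) Filter.atTop (nhds (xs, ys)) →
      f xs ys = L ∧ xs ∈ X ∧ ys ∈ Y := by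
    intro φ hφ xs ys h
    have hφt : Filter.Tendsto φ Filter.atTop Filter.atTop := hφ.tendsto_atTop
    have hvphi : Filter.Tendsto (fun k => v (φ k)) Filter.atTop (nhds L) :=
      hvL.comp hφt
    have hfxy : Filter.Tendsto (fun k => f (x (φ k)) (y (φ k))) Filter.atTop
        (nhds (f xs ys)) := (hf.tendsto (xs, ys)).comp h
    have hxs : xs ∈ X := by
      have hxt : Filter.Tendsto (fun k => x (φ k)) Filter.atTop (nhds xs) :=
        (continuous_fst.tendsto _).comp h
      exact hXc.isClosed.mem_of_tendsto hxt
        (Filter.Eventually.of_forall fun k => (hmem (φ k)).1)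
    have hys : ys ∈ Y := by
      have hyt : Filter.Tendsto (fun k => y (φ k)) Filter.atTop (nhds ys) :=
        (continuous_snd.tendsto _).comp h
      exact hYc.isClosed.mem_of_tendsto hyt
        (Filter.Eventually.of_forall fun k => (hmem (φ k)).2)
    exact ⟨tendsto_nhds_unique hfxy hvphi, hxs, hys⟩
  constructor
  · intro φ hφ xs ys h
    obtain ⟨hval, hxs, hys⟩ := key φ hφ xs ys h
    have hφt : Filter.Tendsto φ Filter.atTop Filter.atTop := hφ.tendsto_atTop
    have hxt : Filter.Tendsto (fun k => x (φ k)) Filter.atTop (nhds xs) :=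
      (continuous_fst.tendsto _).comp h
    have hyt : Filter.Tendsto (fun k => y (φ k)) Filter.atTop (nhds ys) :=
      (continuous_snd.tendsto _).comp h
    constructor
    · -- x-direction: use a convergent subsequence of x (φ k + 1)
      intro x' hx'
      obtain ⟨xb, hxbX, ψ, hψ, hxbt⟩ :=
        hXc.tendsto_subseq (x := fun k => x (φ k + 1)) fun k => (hmem (φ k + 1)).1
      have hψt : Filter.Tendsto ψ Filter.atTop Filter.atTop := hψ.tendsto_atTop
      -- f (x (φ (ψ j) + 1)) (y (φ (ψ j))) = w (φ (ψ j)) → L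
      have hwsub : Filter.Tendsto (fun j => w (φ (ψ j))) Filter.atTop (nhds L) :=
        hwL.comp (hφt.comp hψt)
      -- also → f xb ys by continuity
      have hpair : Filter.Tendsto (fun j => (x (φ (ψ j) + 1), y (φ (ψ j))))
          Filter.atTop (nhds (xb, ys)) :=
        hxbt.prodMk_nhds (hyt.comp hψt)
      have hwsub' : Filter.Tendsto (fun j => w (φ (ψ j))) Filter.atTop
          (nhds (f xb ys)) := (hf.tendsto (xb, ys)).comp hpair
      have hxbval : f xb ys = L := tendsto_nhds_unique hwsub' hwsub
      -- pass the minimality inequality to the limit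
      have hle : ∀ j, w (φ (ψ j)) ≤ f x' (y (φ (ψ j))) := fun j =>
        (hstep (φ (ψ j))).2.1 x' hx'
      have hrt : Filter.Tendsto (fun j => f x' (y (φ (ψ j)))) Filter.atTop
          (nhds (f x' ys)) := by
        have : Filter.Tendsto (fun j => ((x' : E), y (φ (ψ j)))) Filter.atTop
            (nhds (x', ys)) := tendsto_const_nhds.prodMk_nhds (hyt.comp hψt)
        exact (hf.tendsto (x', ys)).comp this
      have : L ≤ f x' ys := le_of_tendsto_of_tendsto' hwsub hrt hle
      calc f xs ys = L := hval
        _ ≤ f x' ys := this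
    · -- y-direction
      intro y' hy'
      have hle : ∀ᶠ k in Filter.atTop, v (φ k) ≤ f (x (φ k)) y' := by
        filter_upwards [Filter.eventually_ge_atTop 1] with k hk
        have h1 : 1 ≤ φ k := hk.trans (hφ.le_apply)
        obtain ⟨m, hm⟩ : ∃ m, φ k = m + 1 := ⟨φ k - 1, by omega⟩
        rw [hv]
        simp only [hm]
        exact (hstep m).2.2.2 y' hy'
      have hvphi : Filter.Tendsto (fun k => v (φ k)) Filter.atTop (nhds L) :=
        hvL.comp hφt
      have hrt : Filter.Tendsto (fun k => f (x (φ k)) y') Filter.atTop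
          (nhds (f xs y')) := by
        have : Filter.Tendsto (fun k => (x (φ k), (y' : F))) Filter.atTop
            (nhds (xs, y')) := hxt.prodMk_nhds tendsto_const_nhds
        exact (hf.tendsto (xs, y')).comp this
      have : L ≤ f xs y' := le_of_tendsto_of_tendsto hvphi hrt hle
      calc f xs ys = L := hval
        _ ≤ f xs y' := this
  · intro φ ψ hφ hψ xs ys xs' ys' h1 h2
    rw [(key φ hφ xs ys h1).1, (key ψ hψ xs' ys' h2).1]
end
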